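/- Let f : X → Y be a map between pointed spaces such that the suspension Σf is null-homotopic. Then for any map g : Y → Z into a loop space Z = ΩW, the composite g∘f is null-homotopic provided g factors through the adjoint of a map ΣY → W; in particular, if Q : X×Y → X∧Y is the quotient map, then ΩQ is null-homotopic. -/

import Mathlib

open scoped unitInterval

/-- The based loop space of `Y` at `y`, as a subspace of the mapping space. -/
abbrev LoopSp (Y : Type) [TopologicalSpace Y] (y : Y) : Type :=
  {γ : C(I, Y) // γ 0 = y ∧ γ 1 = y}

/-- The constant loop. -/
def constLoop (Y : Type) [TopologicalSpace Y] (y : Y) : LoopSp Y y :=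
  ⟨ContinuousMap.const I y, rfl, rfl⟩

/-- The map of loop spaces induced by `f : X → Y`. -/
def loopMap {X Y : Type} [TopologicalSpace X] [TopologicalSpace Y]
    (f : C(X, Y)) (x₀ : X) : C(LoopSp X x₀, LoopSp Y (f x₀)) :=
  ⟨fun γ => ⟨f.comp γ.1, by simp [γ.2.1], by simp [γ.2.2]⟩,
    Continuous.subtype_mk
      ((ContinuousMap.continuous_postcomp f).comp continuous_subtype_val) _⟩

/-- The setoid collapsing a subset `S` to a point. -/
def collapseSetoid {Z : Type} (S : Set Z) : Setoid Z where
  r p q := p = q ∨ (p ∈ S ∧ q ∈ S)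
  iseqv := ⟨fun _ => Or.inl rfl,
    fun h => h.elim (fun e => Or.inl e.symm) (fun hh => Or.inr ⟨hh.2, hh.1⟩),
    fun h1 h2 => by
      rcases h1 with rfl | h1
      · exact h2
      · rcases h2 with rfl | h2
        · exact Or.inr h1
        · exact Or.inr ⟨h1.1, h2.2⟩⟩

/-- The quotient space collapsing `S` to a point. -/
def Collapse {Z : Type} [TopologicalSpace Z] (S : Set Z) : Type :=
  Quotient (collapseSetoid S)

instance {Z : Type} [TopologicalSpace Z] (S : Set Z) : TopologicalSpace (Collapse S) :=
  instTopologicalSpaceQuotient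

/-- The smash product `X ∧ Y`. -/
def Smash (X Y : Type) [TopologicalSpace X] [TopologicalSpace Y] (x₀ : X) (y₀ : Y) :
    Type :=
  Collapse {p : X × Y | p.1 = x₀ ∨ p.2 = y₀}

instance (X Y : Type) [TopologicalSpace X] [TopologicalSpace Y] (x₀ : X) (y₀ : Y) :
    TopologicalSpace (Smash X Y x₀ y₀) :=
  instTopologicalSpaceQuotient

/-- The quotient map `Q : X × Y → X ∧ Y`. -/
def smashQuot (X Y : Type) [TopologicalSpace X] [TopologicalSpace Y] (x₀ : X) (y₀ : Y) :
    C(X × Y, Smash X Y x₀ y₀) :=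
  ⟨Quotient.mk _, continuous_quotient_mk'⟩

/-- The reduced suspension `ΣX` of `(X, x₀)`. -/
def Susp (X : Type) [TopologicalSpace X] (x₀ : X) : Type :=
  Collapse {p : X × I | p.2 = 0 ∨ p.2 = 1 ∨ p.1 = x₀}

instance (X : Type) [TopologicalSpace X] (x₀ : X) : TopologicalSpace (Susp X x₀) :=
  instTopologicalSpaceQuotient

/-- The class of `(x, t)` in `ΣX`. -/
def suspMk {X : Type} [TopologicalSpace X] (x₀ : X) (x : X) (t : I) : Susp X x₀ :=
  Quotient.mk _ (x, t)

/-- The suspension `Σf` of a pointed map `f`. -/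
def suspMap {X Y : Type} [TopologicalSpace X] [TopologicalSpace Y]
    (x₀ : X) (y₀ : Y) (f : C(X, Y)) (hf : f x₀ = y₀) :
    C(Susp X x₀, Susp Y y₀) :=
  ⟨Quotient.lift (fun p => suspMk y₀ (f p.1) p.2)
    (by
      rintro p q (rfl | ⟨hp, hq⟩)
      · rfl
      · refine Quotient.sound (Or.inr ⟨?_, ?_⟩) <;>
        · first
          | rcases hp with h | h | h
            · exact Or.inl h
            · exact Or.inr (Or.inl h)
            · exact Or.inr (Or.inr (by rw [h, hf]))
          | rcases hq with h | h | h
            · exact Or.inl h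
            · exact Or.inr (Or.inl h)
            · exact Or.inr (Or.inr (by rw [h, hf]))),
    (continuous_quotient_mk'.comp ((map_continuous f).comp continuous_fst |>.prodMk
      continuous_snd)).quotient_lift _⟩

@[simp] theorem suspMap_mk {X Y : Type} [TopologicalSpace X] [TopologicalSpace Y]
    (x₀ : X) (y₀ : Y) (f : C(X, Y)) (hf : f x₀ = y₀) (x : X) (t : I) :
    suspMap x₀ y₀ f hf (suspMk x₀ x t) = suspMk y₀ (f x) t :=
  rfl

/-!
A based map `g : Y → ΩW` adjoint to `ĝ : ΣY → W` turns a free null-homotopy `H` of `Σf` into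
the free homotopy `(s, x, t) ↦ ĝ (H (s, [x, t]))` from `g ∘ f` to the constant family, during
which the base point of the loops moves along a path `c` ending at the base point of `W`. Such
a family is based null-homotopic: each loop is homotopic, through the square swept out by the
homotopy, to the detour `c · const · c⁻¹`, and this palindromic loop contracts onto its starting
point. For the smash product, a loop `γ = (α, β)` in `A × B` based at `(a₀, b₀)` is contracted
in `A ∧ B` by `t ↦ [α t, β ((1 - s) t)]`, since `[α t, b₀]` is the base point.
-/

open ContinuousMap unitInterval

/-- `t ↦ (detourFst t, detourSnd t)` runs along three sides of the unit square, from `(0, 0)`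
through `(1, 0)` and `(1, 1)` to `(0, 1)`. -/
noncomputable def detourFst (t : I) : I := Set.projIcc 0 1 zero_le_one (3 * min (t : ℝ) (1 - t))

noncomputable def detourSnd (t : I) : I := Set.projIcc 0 1 zero_le_one (3 * t - 1)

@[fun_prop]
theorem continuous_detourFst : Continuous detourFst := by
  unfold detourFst; fun_prop

@[fun_prop]
theorem continuous_detourSnd : Continuous detourSnd := by
  unfold detourSnd; fun_prop

@[simp] theorem detourFst_zero : detourFst 0 = 0 := by simp [detourFst]
@[simp] theorem detourFst_one : detourFst 1 = 0 := by simp [detourFst]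
@[simp] theorem detourSnd_zero : detourSnd 0 = 0 := by simp [detourSnd]
@[simp] theorem detourSnd_one : detourSnd 1 = 1 := by norm_num [detourSnd]

theorem detourFst_symm (t : I) : detourFst (σ t) = detourFst t := by
  rw [detourFst, detourFst, coe_symm_eq, sub_sub_cancel, min_comm]

theorem detourSnd_symm (t : I) : detourSnd (σ t) = σ (detourSnd t) := by
  rw [detourSnd, detourSnd, symm_projIcc, coe_symm_eq]
  ring_nf

theorem detourSnd_eq_zero_or_eq_one_or_detourFst_eq_one (t : I) :
    detourSnd t = 0 ∨ detourSnd t = 1 ∨ detourFst t = 1 := by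
  rcases le_or_gt (3 * (t : ℝ) - 1) 0 with h | h
  · exact Or.inl (Set.projIcc_of_le_left _ h)
  rcases le_or_gt 1 (3 * (t : ℝ) - 1) with h' | h'
  · exact Or.inr (Or.inl (Set.projIcc_of_right_le _ h'))
  refine Or.inr (Or.inr (Set.projIcc_of_right_le _ ?_))
  rw [mul_min_of_nonneg _ _ (by norm_num)]
  exact le_min (by linarith) (by linarith)

namespace LoopSp

variable {Z W : Type} [TopologicalSpace Z] [TopologicalSpace W] {w₀ : W}

def family (F : C(Z × I, W)) (h₀ : ∀ z, F (z, 0) = w₀) (h₁ : ∀ z, F (z, 1) = w₀) :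
    C(Z, LoopSp W w₀) :=
  ⟨fun z => ⟨F.curry z, h₀ z, h₁ z⟩, F.curry.continuous.subtype_mk _⟩

@[simp]
theorem family_apply (F : C(Z × I, W)) (h₀ : ∀ z, F (z, 0) = w₀) (h₁ : ∀ z, F (z, 1) = w₀)
    (z : Z) (t : I) : (family F h₀ h₁ z).1 t = F (z, t) :=
  rfl

theorem homotopic_of_family {ℓ₀ ℓ₁ : C(Z, LoopSp W w₀)} (F : C((I × Z) × I, W))
    (h₀ : ∀ p, F (p, 0) = w₀) (h₁ : ∀ p, F (p, 1) = w₀)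
    (hℓ₀ : ∀ z t, F ((0, z), t) = (ℓ₀ z).1 t) (hℓ₁ : ∀ z t, F ((1, z), t) = (ℓ₁ z).1 t) :
    ℓ₀.Homotopic ℓ₁ :=
  ⟨{ toContinuousMap := family F h₀ h₁
     map_zero_left := fun z => Subtype.ext (ContinuousMap.ext (hℓ₀ z))
     map_one_left := fun z => Subtype.ext (ContinuousMap.ext (hℓ₁ z)) }⟩

theorem homotopic_const_of_symm (ℓ : C(Z, LoopSp W w₀))
    (hℓ : ∀ z t, (ℓ z).1 (σ t) = (ℓ z).1 t) :
    ℓ.Homotopic (const Z (constLoop W w₀)) := by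
  refine homotopic_of_family ⟨fun p => (ℓ p.1.2).1 (σ p.1.1 * min p.2 (σ p.2)), by fun_prop⟩
    (fun p => ?_) (fun p => ?_) (fun z t => ?_) (fun z t => ?_)
  · simpa using (ℓ p.2).2.1
  · simpa using (ℓ p.2).2.1
  · rcases min_choice t (σ t) with h | h <;> simp [h, hℓ]
  · simpa [constLoop] using (ℓ z).2.1

theorem homotopic_const_of_freeHomotopy (ℓ : C(Z, LoopSp W w₀)) (G : C(I × Z × I, W))
    (hG₀ : ∀ z t, G (0, z, t) = (ℓ z).1 t) (hG₁ : ∀ z t, G (1, z, t) = w₀)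
    (hG : ∀ s z, G (s, z, 0) = G (s, z, 1)) :
    ℓ.Homotopic (const Z (constLoop W w₀)) := by
  have hG₀₀ : ∀ z, G (0, z, 0) = w₀ := fun z => (hG₀ z 0).trans (ℓ z).2.1
  have hG₀₁ : ∀ z, G (0, z, 1) = w₀ := fun z => (hG₀ z 1).trans (ℓ z).2.2
  let detour : C(Z, LoopSp W w₀) :=
    family ⟨fun p => G (detourFst p.2, p.1, detourSnd p.2), by fun_prop⟩
      (fun z => by simpa using hG₀₀ z) (fun z => by simpa using hG₀₁ z)
  have homotopic_detour : ℓ.Homotopic detour := by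
    refine homotopic_of_family
      ⟨fun p => G (p.1.1 * detourFst p.2, p.1.2,
        Set.Icc.convexComb p.2 (detourSnd p.2) p.1.1), by fun_prop⟩
      (fun p => ?_) (fun p => ?_) (fun z t => ?_) (fun z t => ?_)
    · simpa using hG₀₀ p.2
    · simpa using hG₀₁ p.2
    · simpa using hG₀ z t
    · simp [detour]
  have detour_symm : ∀ z t, (detour z).1 (σ t) = (detour z).1 t := by
    intro z t
    simp only [detour, family_apply, ContinuousMap.coe_mk, detourFst_symm, detourSnd_symm]
    rcases detourSnd_eq_zero_or_eq_one_or_detourFst_eq_one t with h | h | h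
    · rw [h, symm_zero, hG]
    · rw [h, symm_one, hG]
    · rw [h, hG₁, hG₁]
  exact homotopic_detour.trans (homotopic_const_of_symm detour detour_symm)

end LoopSp

section Suspension

variable {X : Type} [TopologicalSpace X]

@[fun_prop]
theorem continuous_suspMk (x₀ : X) : Continuous fun p : X × I => suspMk x₀ p.1 p.2 :=
  continuous_quotient_mk'

theorem suspMk_zero_eq_one (x₀ x x' : X) : suspMk x₀ x 0 = suspMk x₀ x' 1 :=
  Quotient.sound (Or.inr ⟨Or.inl rfl, Or.inr (Or.inl rfl)⟩)

end Suspension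

theorem comp_homotopic_const_of_suspMap_homotopic_const {X Y W : Type} [TopologicalSpace X]
    [TopologicalSpace Y] [TopologicalSpace W] {x₀ : X} {y₀ : Y} {w₀ : W} {f : C(X, Y)}
    {hf : f x₀ = y₀}
    (hSf : (suspMap x₀ y₀ f hf).Homotopic (const (Susp X x₀) (suspMk y₀ y₀ 0)))
    (g : C(Y, LoopSp W w₀)) (gAdj : C(Susp Y y₀, W))
    (hadj : ∀ (y : Y) (t : I), (g y).1 t = gAdj (suspMk y₀ y t)) :
    (g.comp f).Homotopic (const X (constLoop W w₀)) := by
  obtain ⟨H⟩ := hSf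
  refine LoopSp.homotopic_const_of_freeHomotopy _
    ⟨fun p => gAdj (H (p.1, suspMk x₀ p.2.1 p.2.2)), by fun_prop⟩
    (fun z t => ?_) (fun z t => ?_) (fun s z => ?_)
  · simp [hadj]
  · simp [← hadj, (g y₀).2.1]
  · simp only [ContinuousMap.coe_mk, suspMk_zero_eq_one x₀ z z]

section Smash

variable {A B : Type} [TopologicalSpace A] [TopologicalSpace B] {a₀ : A} {b₀ : B}

theorem smashQuot_fst_eq_base (b : B) :
    smashQuot A B a₀ b₀ (a₀, b) = smashQuot A B a₀ b₀ (a₀, b₀) :=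
  Quotient.sound (Or.inr ⟨Or.inl rfl, Or.inl rfl⟩)

theorem smashQuot_snd_eq_base (a : A) :
    smashQuot A B a₀ b₀ (a, b₀) = smashQuot A B a₀ b₀ (a₀, b₀) :=
  Quotient.sound (Or.inr ⟨Or.inr rfl, Or.inl rfl⟩)

theorem loopMap_smashQuot_homotopic_const :
    (loopMap (smashQuot A B a₀ b₀) (a₀, b₀)).Homotopic
      (const (LoopSp (A × B) (a₀, b₀))
        (constLoop (Smash A B a₀ b₀) (smashQuot A B a₀ b₀ (a₀, b₀)))) := by
  refine LoopSp.homotopic_of_family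
    ⟨fun p => smashQuot A B a₀ b₀ ((p.1.2.1 p.2).1, (p.1.2.1 (σ p.1.1 * p.2)).2), by fun_prop⟩
    (fun p => ?_) (fun p => ?_) (fun γ t => ?_) (fun γ t => ?_)
  · simp [p.2.2.1]
  · simpa [p.2.2.2] using smashQuot_fst_eq_base _
  · simp [loopMap]
  · simpa [γ.2.1, constLoop] using smashQuot_snd_eq_base _

end Smash

/-- Let `f : X → Y` be a pointed map whose suspension `Σf` is null-homotopic.
Then for any map `g : Y → ΩW` which is the adjoint of a map `ĝ : ΣY → W`, the
composite `g ∘ f` is null-homotopic; in particular, for the quotient map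
`Q : X × Y → X ∧ Y` onto the smash product, `ΩQ` is null-homotopic. -/
theorem stmt_7 (X Y W : Type) [TopologicalSpace X] [TopologicalSpace Y]
    [TopologicalSpace W] (x₀ : X) (y₀ : Y) (w₀ : W)
    (f : C(X, Y)) (hf : f x₀ = y₀)
    (hSf : (suspMap x₀ y₀ f hf).Homotopic
      (ContinuousMap.const (Susp X x₀) (suspMk y₀ y₀ 0)))
    (g : C(Y, LoopSp W w₀)) (gAdj : C(Susp Y y₀, W))
    (hadj : ∀ (y : Y) (t : I), ((g y : C(I, W)) t) = gAdj (suspMk y₀ y t)) :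
    (g.comp f).Homotopic (ContinuousMap.const X (constLoop W w₀)) ∧
    ∀ (A B : Type) [TopologicalSpace A] [TopologicalSpace B] (a₀ : A) (b₀ : B),
      (loopMap (smashQuot A B a₀ b₀) (a₀, b₀)).Homotopic
        (ContinuousMap.const (LoopSp (A × B) (a₀, b₀))
          (constLoop (Smash A B a₀ b₀) (smashQuot A B a₀ b₀ (a₀, b₀)))) :=
  ⟨comp_homotopic_const_of_suspMap_homotopic_const hSf g gAdj hadj,
    fun _ _ _ _ _ _ => loopMap_smashQuot_homotopic_const⟩
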